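/- arXiv:1405.0767 — 5 statements merged into one kernel-verified Lean document; each statement's English description precedes it below -/
import Mathlib

section
/- Let K ≥ 1 be a real number, let B be a 4×4 real matrix with nonnegative entries all of whose columns are nonzero, and let A be an invertible 4×4 matrix with nonnegative integer entries bounded above by K such that at least two rows of A have all entries positive and every other row of A equals a row of the 4×4 identity matrix. Then for all indices i, j ∈ {1,2,3,4}: |C_i(BA)|/|C_j(BA)| ≤ K + max_{k,ℓ ∈ {1,2,3,4}} |C_k(B)|/|C_ℓ(B)|. -/
/-- The `1`-norm of the `i`-th column of a `4×4` real matrix. -/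
noncomputable def colNorm (X : Matrix (Fin 4) (Fin 4) ℝ) (i : Fin 4) : ℝ :=
  ∑ k, |X k i|

/-- At least two rows of `A` have all entries positive, and every other row of `A`
equals a row of the `4×4` identity matrix. -/
def RowsPosOrId (A : Matrix (Fin 4) (Fin 4) ℝ) : Prop :=
  ∃ R : Finset (Fin 4), 2 ≤ R.card ∧ (∀ i ∈ R, ∀ j, 0 < A i j) ∧
    (∀ i ∉ R, ∃ k, ∀ j, A i j = if j = k then 1 else 0)

/-- If `B` is nonnegative with nonzero columns and `A` is invertible with nonnegative
integer entries bounded by `K`, at least two positive rows, and remaining rows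
from the identity matrix, then each ratio of column `1`-norms of `B·A` is at most
`K` plus the maximal ratio of column `1`-norms of `B`. -/
theorem colNorm_ratio_of_almostPos (K : ℝ) (hK : 1 ≤ K) (B A : Matrix (Fin 4) (Fin 4) ℝ)
    (hB : ∀ i j, 0 ≤ B i j) (hBcol : ∀ j, ∃ i, B i j ≠ 0)
    (hAunit : IsUnit A)
    (hAint : ∀ i j, ∃ m : ℕ, A i j = (m : ℝ))
    (hAK : ∀ i j, A i j ≤ K) (hrows : RowsPosOrId A) :
    ∀ i j, colNorm (B * A) i / colNorm (B * A) j ≤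
      K + (Finset.univ : Finset (Fin 4 × Fin 4)).sup'
        ⟨(0, 0), Finset.mem_univ _⟩ (fun p => colNorm B p.1 / colNorm B p.2) := by
  classical
  intro i j
  obtain ⟨R, hR2, hRpos, hRid⟩ := hrows
  set c : Fin 4 → ℝ := colNorm B with hcdef
  set M : ℝ := (Finset.univ : Finset (Fin 4 × Fin 4)).sup'
        ⟨(0, 0), Finset.mem_univ _⟩ (fun p => c p.1 / c p.2) with hMdef
  have hA0 : ∀ a b, 0 ≤ A a b := by
    intro a b; obtain ⟨m, hm⟩ := hAint a b; rw [hm]; positivity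
  have hA1 : ∀ a b, A a b ≠ 0 → 1 ≤ A a b := by
    intro a b h; obtain ⟨m, hm⟩ := hAint a b
    rw [hm] at h ⊢
    exact_mod_cast Nat.one_le_iff_ne_zero.2 (by exact_mod_cast h)
  have hcpos : ∀ k, 0 < c k := by
    intro k
    obtain ⟨a, ha⟩ := hBcol k
    have h1 : 0 < |B a k| := abs_pos.2 ha
    have h2 : |B a k| ≤ ∑ b, |B b k| :=
      Finset.single_le_sum (f := fun b => |B b k|) (fun b _ => abs_nonneg _) (Finset.mem_univ a)
    exact lt_of_lt_of_le h1 h2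
  have hcol : ∀ t, colNorm (B * A) t = ∑ m, A m t * c m := by
    intro t
    unfold colNorm
    simp only [Matrix.mul_apply]
    have habs : ∀ k, |∑ m, B k m * A m t| = ∑ m, B k m * A m t := fun k =>
      abs_of_nonneg (Finset.sum_nonneg fun m _ => mul_nonneg (hB k m) (hA0 m t))
    simp_rw [habs]
    rw [Finset.sum_comm]
    refine Finset.sum_congr rfl fun m _ => ?_
    have : c m = ∑ k, B k m := by
      simp only [hcdef, colNorm]
      exact Finset.sum_congr rfl fun k _ => abs_of_nonneg (hB k m)
    rw [this, Finset.mul_sum]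
    exact Finset.sum_congr rfl fun k _ => mul_comm _ _
  have hMle : ∀ a b, c a / c b ≤ M := fun a b =>
    Finset.le_sup' (f := fun p : Fin 4 × Fin 4 => c p.1 / c p.2) (Finset.mem_univ (a, b))
  have hcM : ∀ a b, c a ≤ M * c b := fun a b => by
    have := hMle a b
    rwa [div_le_iff₀ (hcpos b)] at this
  have hM1 : (1 : ℝ) ≤ M := by
    have := hMle 0 0
    rwa [div_self (hcpos 0).ne'] at this
  obtain ⟨ms, hms⟩ : R.Nonempty := Finset.card_pos.mp (by omega)
  -- denominator facts
  set D : ℝ := ∑ m, A m j * c m with hDdef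
  have hsumRD : ∑ m ∈ R, c m ≤ D := by
    calc ∑ m ∈ R, c m ≤ ∑ m ∈ R, A m j * c m := by
          refine Finset.sum_le_sum fun m hm => ?_
          have h1 : 1 ≤ A m j := hA1 m j (hRpos m hm j).ne'
          nlinarith [hcpos m]
      _ ≤ D := Finset.sum_le_sum_of_subset_of_nonneg (Finset.subset_univ R)
          (fun m _ _ => mul_nonneg (hA0 m j) (hcpos m).le)
  have hcmsR : c ms ≤ ∑ m ∈ R, c m :=
    Finset.single_le_sum (fun m _ => (hcpos m).le) hms
  have hcmsD : c ms ≤ D := le_trans hcmsR hsumRD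
  have hDpos : 0 < D := lt_of_lt_of_le (hcpos ms) hcmsD
  -- off-R sum bound
  have hS : ∑ m ∈ Rᶜ, A m i * c m ≤ M * c ms := by
    by_cases h : ∃ m ∈ Rᶜ, A m i ≠ 0
    · obtain ⟨m0, hm0R, hm0⟩ := h
      obtain ⟨k0, hk0⟩ := hRid m0 (Finset.mem_compl.mp hm0R)
      have hik0 : i = k0 := by
        by_contra hne
        exact hm0 (by rw [hk0 i, if_neg hne])
      have hA0i : A m0 i = 1 := by rw [hk0 i, if_pos hik0]
      have hsum : ∑ m ∈ Rᶜ, A m i * c m = c m0 := by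
        rw [Finset.sum_eq_single_of_mem m0 hm0R]
        · rw [hA0i, one_mul]
        · intro m hm hne
          obtain ⟨k1, hk1⟩ := hRid m (Finset.mem_compl.mp hm)
          by_cases hik1 : i = k1
          · exfalso
            have hrow : A m = A m0 := by
              funext b
              rw [hk1 b, hk0 b, ← hik1, ← hik0]
            have hdet : A.det = 0 := Matrix.det_zero_of_row_eq hne hrow
            have := hAunit
            rw [Matrix.isUnit_iff_isUnit_det, hdet] at this
            exact (not_isUnit_zero this)
          · rw [hk1 i, if_neg hik1, zero_mul]
      rw [hsum]
      exact hcM m0 ms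
    · push_neg at h
      have : ∑ m ∈ Rᶜ, A m i * c m = 0 :=
        Finset.sum_eq_zero fun m hm => by rw [h m hm, zero_mul]
      rw [this]
      nlinarith [hM1, hcpos ms]
  -- R sum bound
  have hRsum : ∑ m ∈ R, A m i * c m ≤ K * D := by
    calc ∑ m ∈ R, A m i * c m ≤ ∑ m ∈ R, K * c m :=
          Finset.sum_le_sum fun m _ => mul_le_mul_of_nonneg_right (hAK m i) (hcpos m).le
      _ = K * ∑ m ∈ R, c m := (Finset.mul_sum _ _ _).symm
      _ ≤ K * D := mul_le_mul_of_nonneg_left hsumRD (by linarith)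
  -- conclude
  rw [hcol i, hcol j, ← hDdef, div_le_iff₀ hDpos]
  have hsplit : ∑ m, A m i * c m = ∑ m ∈ R, A m i * c m + ∑ m ∈ Rᶜ, A m i * c m :=
    (Finset.sum_add_sum_compl R _).symm
  rw [hsplit]
  have hMD : M * c ms ≤ M * D :=
    mul_le_mul_of_nonneg_left hcmsD (by linarith)
  calc ∑ m ∈ R, A m i * c m + ∑ m ∈ Rᶜ, A m i * c m
      ≤ K * D + M * c ms := add_le_add hRsum hS
    _ ≤ K * D + M * D := by linarith
    _ = (K + M) * D := by ring
end

section
/- There exist real numbers 0 < c_1, c_2 < 1 with the following property. Let x_1, x_2, x_3, x_4 ∈ ℝ³ be four points, not all equal, let Δ' be their convex hull and let τ be the diameter of Δ', and let [a,b] ⊆ Δ' be a line segment with ‖b − a‖ ≥ c_1·τ. Then there exist indices i ≠ j in {1,2,3,4} with ‖x_i − x_j‖ ≥ ‖b − a‖ and |⟨ b − a, (x_i − x_j)/‖x_i − x_j‖ ⟩| ≥ c_2·‖b − a‖. -/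
open RealInnerProductSpace

/-!
Put `v = b - a`. The linear functional `⟪v, ·⟫` attains its maximum and minimum over the
convex hull at vertices `x i` and `x j`, so `‖v‖² = ⟪v, b⟫ - ⟪v, a⟫ ≤ ⟪v, x i - x j⟫`.
By Cauchy–Schwarz the edge `x i - x j` is then at least as long as `v`, and since it is at most
the diameter, hence at most `2‖v‖`, the projection of `v` onto it is at least `‖v‖² / (2‖v‖)`.
Both constants can be taken to be `1/2`.
-/

theorem exists_apply_sub_le_of_mem_convexHull {E : Type*} [AddCommGroup E] [Module ℝ E]
    (f : E →ₗ[ℝ] ℝ) {s : Set E} {a b : E} (ha : a ∈ convexHull ℝ s) (hb : b ∈ convexHull ℝ s) :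
    ∃ p ∈ s, ∃ q ∈ s, f b - f a ≤ f p - f q := by
  have hconv := convex_convexHull ℝ s
  obtain ⟨p, hp, hbp⟩ :=
    (f.convexOn hconv).exists_ge_of_mem_convexHull (subset_convexHull ℝ s) hb
  obtain ⟨q, hq, hqa⟩ :=
    (f.concaveOn hconv).exists_le_of_mem_convexHull (subset_convexHull ℝ s) ha
  exact ⟨p, hp, q, hq, by linarith⟩

variable {E : Type*} [NormedAddCommGroup E] [InnerProductSpace ℝ E]

theorem exists_sq_norm_sub_le_inner_of_mem_convexHull {s : Set E} {a b : E}
    (ha : a ∈ convexHull ℝ s) (hb : b ∈ convexHull ℝ s) :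
    ∃ p ∈ s, ∃ q ∈ s, ‖b - a‖ ^ 2 ≤ ⟪b - a, p - q⟫ := by
  obtain ⟨p, hp, q, hq, h⟩ := exists_apply_sub_le_of_mem_convexHull
    (innerₛₗ ℝ (b - a)) ha hb
  refine ⟨p, hp, q, hq, ?_⟩
  simpa only [innerₛₗ_apply_apply, ← inner_sub_right, real_inner_self_eq_norm_sq] using h

theorem norm_le_of_sq_norm_le_inner {v e : E} (h : ‖v‖ ^ 2 ≤ ⟪v, e⟫) : ‖v‖ ≤ ‖e‖ := by
  have hcs : ⟪v, e⟫ ≤ ‖v‖ * ‖e‖ := real_inner_le_norm v e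
  nlinarith [norm_nonneg v, norm_nonneg e]

theorem sq_norm_div_le_abs_inner_normalize {v e : E} (h : ‖v‖ ^ 2 ≤ ⟪v, e⟫) :
    ‖v‖ ^ 2 / ‖e‖ ≤ |⟪v, ‖e‖⁻¹ • e⟫| := by
  rw [real_inner_smul_right, inv_mul_eq_div]
  exact (div_le_div_of_nonneg_right h (norm_nonneg e)).trans (le_abs_self _)

/-- There are universal constants `0 < c₁, c₂ < 1` such that: for any four points of
`ℝ³`, not all equal, with convex hull `Δ'` of diameter `τ`, and any segment `[a,b] ⊆ Δ'`
of length at least `c₁·τ`, some edge of `Δ'` has length at least `‖b - a‖` and the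
orthogonal projection of `[a,b]` onto its direction has length at least `c₂·‖b - a‖`. -/
theorem segment_projects_onto_long_edge :
    ∃ c₁ c₂ : ℝ, 0 < c₁ ∧ c₁ < 1 ∧ 0 < c₂ ∧ c₂ < 1 ∧
      ∀ x : Fin 4 → EuclideanSpace ℝ (Fin 3), (∃ i j, x i ≠ x j) →
        ∀ a b : EuclideanSpace ℝ (Fin 3),
          segment ℝ a b ⊆ convexHull ℝ (Set.range x) →
          c₁ * Metric.diam (convexHull ℝ (Set.range x)) ≤ ‖b - a‖ →
          ∃ i j, i ≠ j ∧ ‖b - a‖ ≤ ‖x i - x j‖ ∧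
            c₂ * ‖b - a‖ ≤ |⟪b - a, (‖x i - x j‖)⁻¹ • (x i - x j)⟫| := by
  refine ⟨1/2, 1/2, by norm_num, by norm_num, by norm_num, by norm_num, ?_⟩
  intro x hx a b hseg hlen
  rcases eq_or_ne b a with rfl | hab
  · obtain ⟨i, j, hij⟩ := hx
    exact ⟨i, j, ne_of_apply_ne x hij, by simp, by simp⟩
  have hv : 0 < ‖b - a‖ := norm_pos_iff.2 (sub_ne_zero.2 hab)
  obtain ⟨_, ⟨i, rfl⟩, _, ⟨j, rfl⟩, hkey⟩ := exists_sq_norm_sub_le_inner_of_mem_convexHull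
    (hseg (left_mem_segment ℝ a b)) (hseg (right_mem_segment ℝ a b))
  have hlong : ‖b - a‖ ≤ ‖x i - x j‖ := norm_le_of_sq_norm_le_inner hkey
  have hij : i ≠ j := by
    rintro rfl
    simp only [sub_self, norm_zero] at hlong
    linarith
  have hshort : ‖x i - x j‖ ≤ 2 * ‖b - a‖ := by
    have hdiam : ‖x i - x j‖ ≤ Metric.diam (Set.range x) := by
      rw [← dist_eq_norm]
      exact Metric.dist_le_diam_of_mem (Set.finite_range x).isBounded
        ⟨i, rfl⟩ ⟨j, rfl⟩
    rw [convexHull_diam] at hlen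
    linarith
  refine ⟨i, j, hij, hlong, le_trans ?_ (sq_norm_div_le_abs_inner_normalize hkey)⟩
  rw [le_div_iff₀ (hv.trans_le hlong)]
  nlinarith
end

section
/- For all real numbers N ≥ 1 and K ≥ 1 there exists F_1 < 1 with the following property. Let B be a 4×4 real matrix with nonnegative entries, all of whose columns are nonzero, satisfying s_4(B) ≤ K·s_2(B), and let A be an invertible 4×4 matrix with nonnegative integer entries bounded above by N such that at least two rows of A have all entries positive and every other row of A equals a row of the 4×4 identity matrix. Then diam(𝒩(B·A)) ≤ F_1 · diam(𝒩(B)). -/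
/-- The largest column `1`-norm of a `4×4` matrix. -/
noncomputable def sMax (X : Matrix (Fin 4) (Fin 4) ℝ) : ℝ :=
  Finset.univ.sup' Finset.univ_nonempty (colNorm X)

/-- The second-smallest column `1`-norm of a `4×4` matrix (with multiplicity). -/
noncomputable def sSecond (X : Matrix (Fin 4) (Fin 4) ℝ) : ℝ :=
  (Finset.univ.filter (fun p : Fin 4 × Fin 4 => p.1 ≠ p.2)).inf'
    ⟨(0, 1), by decide⟩ (fun p => max (colNorm X p.1) (colNorm X p.2))

/-- The convex hull in Euclidean `ℝ⁴` of the four columns of `X`, each normalized to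
have `1`-norm one. -/
noncomputable def normColHull (X : Matrix (Fin 4) (Fin 4) ℝ) :
    Set (EuclideanSpace ℝ (Fin 4)) :=
  convexHull ℝ {v | ∃ i : Fin 4, v = (colNorm X i)⁻¹ • (WithLp.toLp 2 (fun k => X k i) : EuclideanSpace ℝ (Fin 4))}

/-!
Fix a row `i₀` of `A` with all entries positive whose column `C_{i₀}(B)` has norm at least
`s_2(B)`; two such positive rows exist, and at most one of them can index the shortest column.
Because the entries of `A` and `B` are nonnegative, the normalized `j`-th column of `BA` is the
convex combination of the normalized columns `v_i` of `B` with weights `A i j |C_i(B)| / |C_j(BA)|`.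
The weight of `v_{i₀}` is at least `δ = (4NK)⁻¹`, since `A i₀ j ≥ 1` is an integer and
`|C_j(BA)| ≤ 4 N s_4(B) ≤ 4 N K |C_{i₀}(B)|`. Hence `𝒩(BA)` lies in the image of `𝒩(B)` under
the homothety of ratio `1 - δ` centred at `v_{i₀}`, and `F₁ = 1 - δ` works.
-/

open Finset Metric AffineMap Bornology

section Homothety

variable {E : Type*} [NormedAddCommGroup E] [NormedSpace ℝ E]

theorem dist_homothety_homothety (c x y : E) (r : ℝ) :
    dist (homothety c r x) (homothety c r y) = |r| * dist x y := by
  simp only [homothety_apply, vsub_eq_sub, vadd_eq_add, dist_eq_norm, add_sub_add_right_eq_sub,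
    ← smul_sub, sub_sub_sub_cancel_right, norm_smul, Real.norm_eq_abs]

theorem diam_le_of_subset_image_homothety {s t : Set E} {c : E} {r : ℝ}
    (hts : t ⊆ homothety c r '' s) (hs : IsBounded s) : diam t ≤ |r| * diam s := by
  refine diam_le_of_forall_dist_le (by positivity) fun _ hx' _ hy' => ?_
  obtain ⟨x, hx, rfl⟩ := hts hx'
  obtain ⟨y, hy, rfl⟩ := hts hy'
  rw [dist_homothety_homothety]
  exact mul_le_mul_of_nonneg_left (dist_le_diam_of_mem hs hx hy) (abs_nonneg r)

variable {ι : Type*} [Fintype ι] [DecidableEq ι]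

/-- The preimage under the homothety is the convex combination with weights
`(w - δ e_{i₀}) / (1 - δ)`. -/
theorem sum_smul_mem_image_homothety_convexHull {v : ι → E} {w : ι → ℝ} {i₀ : ι} {δ : ℝ}
    (hδ : δ < 1) (hw : ∀ i, 0 ≤ w i) (hw₁ : ∑ i, w i = 1) (hδw : δ ≤ w i₀) :
    ∑ i, w i • v i ∈ homothety (v i₀) (1 - δ) '' convexHull ℝ (Set.range v) := by
  have hδ' : 1 - δ ≠ 0 := by linarith
  set w' : ι → ℝ := fun i => w i - if i = i₀ then δ else 0
  have hw'_nonneg : ∀ i, 0 ≤ w' i := fun i => by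
    by_cases h : i = i₀
    · subst h; simp only [w', if_true]; linarith
    · simp only [w', h, if_false, sub_zero]; exact hw i
  have hw'v : ∑ i, w' i • v i = ∑ i, w i • v i - δ • v i₀ := by
    simp only [w', sub_smul, ite_smul, zero_smul, sum_sub_distrib, sum_ite_eq', mem_univ, if_true]
  refine ⟨(1 - δ)⁻¹ • ∑ i, w' i • v i, ?_, ?_⟩
  · simp only [smul_sum, smul_smul]
    refine (convex_convexHull ℝ _).sum_mem
      (fun i _ => mul_nonneg (inv_nonneg.2 (by linarith)) (hw'_nonneg i)) ?_
      (fun i _ => subset_convexHull ℝ _ ⟨i, rfl⟩)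
    rw [← mul_sum, sum_sub_distrib, hw₁, sum_ite_eq', if_pos (mem_univ _), inv_mul_cancel₀ hδ']
  · rw [homothety_apply, vsub_eq_sub, vadd_eq_add, smul_sub, smul_smul, mul_inv_cancel₀ hδ',
      one_smul, hw'v]
    module

end Homothety

theorem inv_le_div_sum_of_le {ι : Type*} [Fintype ι] {a : ι → ℝ} {c : ι → ℝ} {i₀ : ι} {N K : ℝ}
    (ha : ∀ i, 0 ≤ a i) (haN : ∀ i, a i ≤ N) (ha₁ : 1 ≤ a i₀) (hc : ∀ i, 0 < c i)
    (hcK : ∀ i, c i ≤ K * c i₀) :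
    (Fintype.card ι * N * K)⁻¹ ≤ a i₀ * c i₀ / ∑ i, a i * c i := by
  have hc₀ := hc i₀
  have hK : 0 < K := pos_of_mul_pos_left (hc₀.trans_le (hcK i₀)) hc₀.le
  have hN : 0 < N := by linarith [haN i₀]
  have hterm : ∀ i ∈ univ, a i * c i ≤ N * (K * c i₀) := fun i _ =>
    mul_le_mul (haN i) (hcK i) (hc i).le hN.le
  have hsum_pos : 0 < ∑ i, a i * c i :=
    calc 0 < a i₀ * c i₀ := by positivity
      _ ≤ ∑ i, a i * c i :=
        single_le_sum (fun i _ => mul_nonneg (ha i) (hc i).le) (mem_univ i₀)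
  have hcard : 0 < (Fintype.card ι : ℝ) := by exact_mod_cast Fintype.card_pos_iff.2 ⟨i₀⟩
  rw [le_div_iff₀ hsum_pos, inv_mul_le_iff₀ (by positivity)]
  calc ∑ i, a i * c i ≤ Fintype.card ι • (N * (K * c i₀)) := sum_le_card_nsmul _ _ _ hterm
    _ = Fintype.card ι * N * K * (1 * c i₀) := by rw [nsmul_eq_mul]; ring
    _ ≤ Fintype.card ι * N * K * (a i₀ * c i₀) := by gcongr

noncomputable def normCol (X : Matrix (Fin 4) (Fin 4) ℝ) (i : Fin 4) : EuclideanSpace ℝ (Fin 4) :=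
  (colNorm X i)⁻¹ • WithLp.toLp 2 (fun k => X k i)

theorem normColHull_eq_convexHull_range (X : Matrix (Fin 4) (Fin 4) ℝ) :
    normColHull X = convexHull ℝ (Set.range (normCol X)) := by
  simp only [normColHull, normCol, Set.range, eq_comm]

theorem isBounded_normColHull (X : Matrix (Fin 4) (Fin 4) ℝ) : IsBounded (normColHull X) := by
  rw [normColHull_eq_convexHull_range, isBounded_convexHull]
  exact (Set.finite_range _).isBounded

theorem colNorm_pos {X : Matrix (Fin 4) (Fin 4) ℝ} {i : Fin 4} (h : ∃ k, X k i ≠ 0) :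
    0 < colNorm X i := by
  obtain ⟨k, hk⟩ := h
  exact (abs_pos.2 hk).trans_le (single_le_sum (fun k _ => abs_nonneg (X k i)) (mem_univ k))

theorem colNorm_le_sMax (X : Matrix (Fin 4) (Fin 4) ℝ) (i : Fin 4) : colNorm X i ≤ sMax X :=
  le_sup' (colNorm X) (mem_univ i)

theorem exists_mem_sSecond_le_colNorm (X : Matrix (Fin 4) (Fin 4) ℝ) {R : Finset (Fin 4)}
    (hR : 2 ≤ R.card) : ∃ i ∈ R, sSecond X ≤ colNorm X i := by
  obtain ⟨i₁, hi₁, i₂, hi₂, hne⟩ := one_lt_card.1 hR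
  have hle : sSecond X ≤ max (colNorm X i₁) (colNorm X i₂) :=
    inf'_le (fun p : Fin 4 × Fin 4 => max (colNorm X p.1) (colNorm X p.2))
      (b := (i₁, i₂)) (by simp [hne])
  rcases max_choice (colNorm X i₁) (colNorm X i₂) with h | h
  · exact ⟨i₁, hi₁, h ▸ hle⟩
  · exact ⟨i₂, hi₂, h ▸ hle⟩

theorem colNorm_mul {B A : Matrix (Fin 4) (Fin 4) ℝ} (hB : ∀ i j, 0 ≤ B i j)
    (hA : ∀ i j, 0 ≤ A i j) (j : Fin 4) : colNorm (B * A) j = ∑ i, A i j * colNorm B i := by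
  simp only [colNorm, Matrix.mul_apply, mul_sum]
  rw [sum_comm]
  refine sum_congr rfl fun k _ => ?_
  rw [abs_of_nonneg (sum_nonneg fun i _ => mul_nonneg (hB k i) (hA i j))]
  exact sum_congr rfl fun i _ => by rw [abs_of_nonneg (hB k i), mul_comm]

theorem normCol_mul {B : Matrix (Fin 4) (Fin 4) ℝ} (hB : ∀ i, colNorm B i ≠ 0)
    (A : Matrix (Fin 4) (Fin 4) ℝ) (j : Fin 4) :
    normCol (B * A) j = ∑ i, (A i j * colNorm B i / colNorm (B * A) j) • normCol B i := by
  ext k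
  simp only [normCol, PiLp.smul_apply, WithLp.ofLp_sum, Finset.sum_apply, Matrix.mul_apply,
    mul_sum, smul_eq_mul]
  refine sum_congr rfl fun i _ => ?_
  field_simp [hB i]

theorem normColHull_mul_subset_image_homothety {B A : Matrix (Fin 4) (Fin 4) ℝ} {i₀ : Fin 4}
    {N K : ℝ} (hB : ∀ i j, 0 ≤ B i j) (hc : ∀ i, 0 < colNorm B i)
    (hcK : ∀ i, colNorm B i ≤ K * colNorm B i₀) (hA : ∀ i j, 0 ≤ A i j) (hAN : ∀ i j, A i j ≤ N)
    (hA₁ : ∀ j, 1 ≤ A i₀ j) (hδ : (4 * N * K)⁻¹ < 1) :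
    normColHull (B * A) ⊆ homothety (normCol B i₀) (1 - (4 * N * K)⁻¹) '' normColHull B := by
  rw [normColHull_eq_convexHull_range, normColHull_eq_convexHull_range]
  refine convexHull_min ?_ ((convex_convexHull ℝ _).affine_image _)
  rintro _ ⟨j, rfl⟩
  have hterm : ∀ i, 0 ≤ A i j * colNorm B i := fun i => mul_nonneg (hA i j) (hc i).le
  have hsum : 0 < ∑ i, A i j * colNorm B i :=
    (by nlinarith [hc i₀, hA₁ j] : 0 < A i₀ j * colNorm B i₀).trans_le
      (single_le_sum (fun i _ => hterm i) (mem_univ i₀))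
  rw [normCol_mul (fun i => (hc i).ne'), colNorm_mul hB hA]
  refine sum_smul_mem_image_homothety_convexHull hδ (fun i => div_nonneg (hterm i) hsum.le)
    (by rw [← sum_div, div_self hsum.ne']) ?_
  simpa using inv_le_div_sum_of_le (hA · j) (hAN · j) (hA₁ j) hc hcK

/-- Multiplying by an almost positive bounded matrix contracts the diameter of the
simplex of normalized columns by a definite factor. -/
theorem diam_normColHull_contracts (N K : ℝ) (hN : 1 ≤ N) (hK : 1 ≤ K) :
    ∃ F₁ : ℝ, F₁ < 1 ∧
      ∀ B A : Matrix (Fin 4) (Fin 4) ℝ,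
        (∀ i j, 0 ≤ B i j) → (∀ j, ∃ i, B i j ≠ 0) →
        sMax B ≤ K * sSecond B →
        IsUnit A → (∀ i j, ∃ m : ℕ, A i j = (m : ℝ)) → (∀ i j, A i j ≤ N) →
        RowsPosOrId A →
        Metric.diam (normColHull (B * A)) ≤ F₁ * Metric.diam (normColHull B) := by
  have hδ : (4 * N * K)⁻¹ < 1 := inv_lt_one_of_one_lt₀ (by nlinarith)
  refine ⟨1 - (4 * N * K)⁻¹, by simp only [sub_lt_self_iff]; positivity, ?_⟩
  intro B A hB hBcol hsK _ hANat hAN ⟨R, hR, hRpos, _⟩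
  have hA : ∀ i j, 0 ≤ A i j := fun i j => by obtain ⟨m, hm⟩ := hANat i j; rw [hm]; positivity
  have hc : ∀ i, 0 < colNorm B i := fun i => colNorm_pos (hBcol i)
  obtain ⟨i₀, hi₀R, hi₀⟩ := exists_mem_sSecond_le_colNorm B hR
  have hA₁ : ∀ j, 1 ≤ A i₀ j := fun j => by
    obtain ⟨m, hm⟩ := hANat i₀ j
    have := hRpos i₀ hi₀R j
    rw [hm] at this ⊢
    exact Nat.one_le_cast.2 (Nat.cast_pos.1 this)
  have hcK : ∀ i, colNorm B i ≤ K * colNorm B i₀ := fun i =>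
    (colNorm_le_sMax B i).trans (hsK.trans (by gcongr))
  have hsub := normColHull_mul_subset_image_homothety hB hc hcK hA hAN hA₁ hδ
  calc diam (normColHull (B * A)) ≤ |1 - (4 * N * K)⁻¹| * diam (normColHull B) :=
        diam_le_of_subset_image_homothety hsub (isBounded_normColHull B)
    _ = (1 - (4 * N * K)⁻¹) * diam (normColHull B) := by rw [abs_of_pos (by linarith)]
end

section
/- Let (X,d) be a metric space, let (p_i)_{i≥1} be a sequence in X converging to a point p_∞ ∈ X, and suppose that for every i ≥ 1 there is a continuous path P_i : [0,1] → X with P_i(0) = p_i and P_i(1) = p_{i+1}, such that diam(P_i([0,1])) → 0 as i → ∞. Then there exists a continuous path in X from p_1 to p_∞. -/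
open Set Filter Metric Topology

/-- If `(p i)` converges to `pLim` in a metric space, consecutive terms `p i`, `p (i+1)`
are joined by continuous paths `P i`, and the diameters of the images of the `P i`
tend to `0`, then there is a continuous path from the first term to `pLim`. -/
theorem joined_of_paths_diam_tendsto_zero {X : Type*} [MetricSpace X]
    (p : ℕ → X) (pLim : X) (hconv : Filter.Tendsto p Filter.atTop (nhds pLim))
    (P : ∀ i : ℕ, Path (p i) (p (i + 1)))
    (hdiam : Filter.Tendsto (fun i => Metric.diam (Set.range (P i)))
      Filter.atTop (nhds 0)) :
    Joined (p 0) pLim := by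
  classical
  -- the infinite concatenation, as a map on ℝ (constant `p 0` on negatives,
  -- path `P n` on `[n, n+1]`)
  set f : ℝ → X := fun s => P ⌊s⌋₊ (Set.projIcc 0 1 zero_le_one (s - ⌊s⌋₊)) with hf
  -- `f` agrees with `P n` suitably reparametrized on `[n, n+1]`
  have hIcc : ∀ n : ℕ, Set.EqOn f
      (fun s => P n (Set.projIcc 0 1 zero_le_one (s - n))) (Icc (n : ℝ) ((n : ℝ) + 1)) := by
    intro n s hs
    rcases eq_or_lt_of_le hs.2 with h | h
    · subst h
      have h1 : ⌊(n : ℝ) + 1⌋₊ = n + 1 := by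
        rw [show ((n : ℝ) + 1) = ((n + 1 : ℕ) : ℝ) by push_cast; ring]
        exact Nat.floor_natCast _
      show f ((n : ℝ) + 1) = _
      rw [hf]
      simp only []
      rw [h1]
      rw [show ((n : ℝ) + 1 - ((n + 1 : ℕ) : ℝ)) = 0 by push_cast; ring,
        show ((n : ℝ) + 1 - (n : ℝ)) = 1 by ring,
        Set.projIcc_left, Set.projIcc_right]
      exact ((P (n + 1)).source).trans ((P n).target).symm
    · have h1 : ⌊s⌋₊ = n := by
        rw [Nat.floor_eq_iff (le_trans (Nat.cast_nonneg n) hs.1)]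
        exact ⟨hs.1, h⟩
      show f s = _
      rw [hf]
      simp only []
      rw [h1]
  -- `f` agrees with `P 0` on `(-∞, 1]`
  have hIic : Set.EqOn f (fun s => P 0 (Set.projIcc 0 1 zero_le_one s)) (Iic (1 : ℝ)) := by
    intro s hs
    rcases lt_or_ge s 0 with h | h
    · have h1 : ⌊s⌋₊ = 0 := Nat.floor_eq_zero.2 (h.trans zero_lt_one)
      show f s = _
      rw [hf]
      simp only []
      rw [h1]
      norm_num
    · have := hIcc 0 ⟨by simpa using h, by simpa using hs⟩
      simpa using this
  -- the locally finite closed cover of ℝ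
  set T : ℕ → Set ℝ := fun n =>
    Nat.rec (Iic (1 : ℝ)) (fun m _ => Icc ((m + 1 : ℕ) : ℝ) (((m + 1 : ℕ) : ℝ) + 1)) n with hT
  have hT0 : T 0 = Iic (1 : ℝ) := rfl
  have hTs : ∀ m : ℕ, T (m + 1) = Icc ((m + 1 : ℕ) : ℝ) (((m + 1 : ℕ) : ℝ) + 1) := fun m => rfl
  have hTlf : LocallyFinite T := by
    intro x
    refine ⟨Ioo (x - 1) (x + 1), Ioo_mem_nhds (by linarith) (by linarith), ?_⟩
    apply (Set.finite_Iic ⌈x + 1⌉₊).subset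
    rintro n ⟨y, hyT, hyI⟩
    cases n with
    | zero => exact Nat.zero_le _
    | succ m =>
        rw [hTs m] at hyT
        have h1 : ((m + 1 : ℕ) : ℝ) ≤ x + 1 := le_trans hyT.1 hyI.2.le
        have h2 : ((m + 1 : ℕ) : ℝ) ≤ (⌈x + 1⌉₊ : ℝ) := h1.trans (Nat.le_ceil _)
        exact_mod_cast h2
  have hTcl : ∀ n, IsClosed (T n) := by
    intro n
    cases n with
    | zero => exact isClosed_Iic
    | succ m => rw [hTs m]; exact isClosed_Icc
  have hTcov : ⋃ n, T n = univ := by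
    ext x
    simp only [mem_iUnion, mem_univ, iff_true]
    rcases le_or_gt x 1 with h | h
    · exact ⟨0, h⟩
    · have hx0 : (0 : ℝ) ≤ x := by linarith
      have h1 : 1 ≤ ⌊x⌋₊ := by
        rw [Nat.one_le_iff_ne_zero]
        intro h0
        have := Nat.lt_floor_add_one x
        rw [h0] at this
        push_cast at this
        linarith
      obtain ⟨m, hm⟩ : ∃ m, ⌊x⌋₊ = m + 1 := ⟨⌊x⌋₊ - 1, by omega⟩
      refine ⟨m + 1, ?_⟩
      rw [hTs m, ← hm]
      exact ⟨Nat.floor_le hx0, (Nat.lt_floor_add_one x).le⟩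
  -- `f` is continuous
  have hfc : Continuous f := by
    apply hTlf.continuous hTcov hTcl
    intro n
    cases n with
    | zero =>
        rw [hT0]
        exact (((P 0).continuous.comp continuous_projIcc).continuousOn).congr hIic
    | succ m =>
        rw [hTs m]
        exact (((P (m + 1)).continuous.comp
          (continuous_projIcc.comp (continuous_id.sub continuous_const))).continuousOn).congr
          (hIcc (m + 1))
  -- the uniform bound on distance to `pLim`
  have hbound : ∀ s : ℝ, dist (f s) pLim ≤
      Metric.diam (Set.range (P ⌊s⌋₊)) + dist (p ⌊s⌋₊) pLim := by
    intro s
    have h1 : dist (f s) (p ⌊s⌋₊) ≤ Metric.diam (Set.range (P ⌊s⌋₊)) := by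
      apply Metric.dist_le_diam_of_mem (isCompact_range (P ⌊s⌋₊).continuous).isBounded
      · exact Set.mem_range_self _
      · exact ⟨0, (P ⌊s⌋₊).source⟩
    calc dist (f s) pLim ≤ dist (f s) (p ⌊s⌋₊) + dist (p ⌊s⌋₊) pLim := dist_triangle _ _ _
      _ ≤ _ := by linarith
  have hlt : ∀ t : unitInterval, t ≠ 1 → (t : ℝ) < 1 := by
    intro t ht
    rcases lt_or_eq_of_le t.2.2 with h | h
    · exact h
    · exact absurd (Subtype.ext h) ht
  -- the path on the unit interval
  set γ : unitInterval → X :=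
    fun t => if h : (t : ℝ) < 1 then f ((t : ℝ) / (1 - t)) else pLim with hγ
  have hγ1 : γ 1 = pLim := by
    simp only [hγ]
    rw [dif_neg (by norm_num)]
  have hγ0 : γ 0 = p 0 := by
    simp only [hγ]
    rw [dif_pos (by norm_num : ((0 : unitInterval) : ℝ) < 1)]
    have h00 : ((0 : unitInterval) : ℝ) / (1 - ((0 : unitInterval) : ℝ)) = 0 := by norm_num
    rw [h00, hf]
    simp only []
    norm_num
  have hcont : Continuous γ := by
    rw [continuous_iff_continuousAt]
    intro t
    by_cases ht : t = (1 : unitInterval)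
    · subst ht
      unfold ContinuousAt
      rw [hγ1, ← nhdsNE_sup_pure, Filter.tendsto_sup]
      constructor
      · -- within the complement of {1}
        have hg : Tendsto (fun t : unitInterval => (t : ℝ) / (1 - t))
            (𝓝[≠] (1 : unitInterval)) atTop := by
          have h1 : Tendsto (fun t : unitInterval => (1 : ℝ) - t)
              (𝓝[≠] (1 : unitInterval)) (𝓝[>] 0) := by
            apply tendsto_nhdsWithin_iff.2
            constructor
            · have : Tendsto (fun t : unitInterval => (1 : ℝ) - t)
                  (𝓝 (1 : unitInterval)) (𝓝 (1 - ((1 : unitInterval) : ℝ))) :=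
                (continuous_const.sub continuous_subtype_val).continuousAt
              simp only [Icc.coe_one, sub_self] at this
              exact this.mono_left nhdsWithin_le_nhds
            · filter_upwards [self_mem_nhdsWithin] with t ht
              exact sub_pos.2 (hlt t ht)
          have h2 : Tendsto (fun t : unitInterval => ((1 : ℝ) - t)⁻¹)
              (𝓝[≠] (1 : unitInterval)) atTop := tendsto_inv_nhdsGT_zero.comp h1
          have h3 : Tendsto (fun t : unitInterval => (t : ℝ))
              (𝓝[≠] (1 : unitInterval)) (𝓝 1) := by
            have h4 : Tendsto (fun t : unitInterval => (t : ℝ))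
                (𝓝 (1 : unitInterval)) (𝓝 ((1 : unitInterval) : ℝ)) :=
              continuous_subtype_val.continuousAt
            simpa using h4.mono_left nhdsWithin_le_nhds
          have := h3.pos_mul_atTop zero_lt_one h2
          simpa [div_eq_mul_inv] using this
        have hn : Tendsto (fun t : unitInterval => ⌊(t : ℝ) / (1 - t)⌋₊)
            (𝓝[≠] (1 : unitInterval)) atTop := tendsto_nat_floor_atTop.comp hg
        have hD : Tendsto (fun n : ℕ =>
            Metric.diam (Set.range (P n)) + dist (p n) pLim) atTop (𝓝 0) := by
          have h2 : Tendsto (fun n => dist (p n) pLim) atTop (𝓝 0) :=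
            tendsto_iff_dist_tendsto_zero.1 hconv
          simpa using hdiam.add h2
        have hsq : Tendsto (fun t : unitInterval =>
            dist (f ((t : ℝ) / (1 - t))) pLim) (𝓝[≠] (1 : unitInterval)) (𝓝 0) :=
          squeeze_zero (fun t => dist_nonneg) (fun t => hbound ((t : ℝ) / (1 - t)))
            (hD.comp hn)
        have key : Tendsto (fun t : unitInterval => f ((t : ℝ) / (1 - t)))
            (𝓝[≠] (1 : unitInterval)) (𝓝 pLim) := tendsto_iff_dist_tendsto_zero.2 hsq
        apply key.congr'
        filter_upwards [self_mem_nhdsWithin] with t ht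
        simp only [hγ]
        rw [dif_pos (hlt t ht)]
      · exact hγ1 ▸ tendsto_pure_nhds γ 1
    · have htlt : (t : ℝ) < 1 := hlt t ht
      have hopen : {t' : unitInterval | (t' : ℝ) < 1} ∈ 𝓝 t :=
        (isOpen_lt continuous_subtype_val continuous_const).mem_nhds htlt
      have hca : ContinuousAt (fun t' : unitInterval => f ((t' : ℝ) / (1 - t'))) t := by
        apply hfc.continuousAt.comp
        exact (continuous_subtype_val.continuousAt).div
          (continuous_const.sub continuous_subtype_val).continuousAt (by
            simp only [ne_eq, sub_eq_zero]
            exact fun h => absurd h.symm (ne_of_lt htlt))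
      apply hca.congr
      filter_upwards [hopen] with t' ht'
      simp only [hγ]
      rw [dif_pos ht']
  exact ⟨⟨⟨γ, hcont⟩, hγ0, hγ1⟩⟩
end

section
/- Let π be an irreducible permutation of {1,…,d} and let P = (p_1<p_2<p_3<p_4) and Q = (q_1<q_2<q_3<q_4) be increasing 4-tuples of elements of {1,…,d} on each of which π restricts to a permutation in the Rauzy class of (4321). Suppose P and Q do not form an accessible pair, and that p_4 < q_1 and max_i π(p_i) < min_j π(q_j). Then there exists an increasing 4-tuple A = (a_1<a_2<a_3<a_4) of elements of {1,…,d} on which π restricts to a permutation in the Rauzy class of (4321), such that A and Q form an accessible pair and the pair of integers (a_1 − p_4, min_i π(a_i) − max_i π(p_i)) is lexicographically strictly smaller than the pair (q_1 − p_4, min_j π(q_j) − max_i π(p_i)). -/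
/-- The Rauzy class of the permutation `(4321)`, written 0-based. -/
def RauzyClass4321 : Set (Equiv.Perm (Fin 4)) :=
  {σ | (σ⁻¹ 0, σ⁻¹ 1, σ⁻¹ 2, σ⁻¹ 3) ∈
    ({((3 : Fin 4), (2 : Fin 4), (1 : Fin 4), (0 : Fin 4)),
      (3, 1, 0, 2), (3, 0, 2, 1), (1, 3, 2, 0), (2, 1, 3, 0), (1, 3, 0, 2), (2, 0, 3, 1)} :
      Set (Fin 4 × Fin 4 × Fin 4 × Fin 4))}

/-- A permutation of `{0,…,n-1}` is irreducible if it maps no proper initial segment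
`{0,…,k-1}` (with `0 < k < n`) to itself. -/
def PermIrreducible {n : ℕ} (π : Equiv.Perm (Fin n)) : Prop :=
  ∀ k : ℕ, 0 < k → k < n → ∃ i : Fin n, (i : ℕ) < k ∧ k ≤ (π i : ℕ)

/-- `σ` is the restriction of `π` to the `4`-tuple `p`: for all indices `a, b`,
`σ a < σ b` iff `π (p a) < π (p b)`. -/
def RestrictsTo {d : ℕ} (π : Equiv.Perm (Fin d)) (p : Fin 4 → Fin d)
    (σ : Equiv.Perm (Fin 4)) : Prop :=
  ∀ a b : Fin 4, σ a < σ b ↔ π (p a) < π (p b)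

/-- `π` restricts on the `4`-tuple `p` to a permutation in the Rauzy class of `(4321)`. -/
def RestrictsToRauzyClass {d : ℕ} (π : Equiv.Perm (Fin d)) (p : Fin 4 → Fin d) : Prop :=
  ∃ σ ∈ RauzyClass4321, RestrictsTo π p σ

/-- Two increasing `4`-tuples `p`, `q` form an *accessible pair* for `π`: there are
indices `r₁ < r₂` and `s₁ < s₂` such that `p r₁, p r₂, q s₁, q s₂` are pairwise
distinct, `π` restricts on them (listed in increasing order by `u`) to an irreducible
permutation of `{1,2,3,4}` other than the transposition exchanging the first and last
symbols, and `π` acts as a rotation on both `(p r₁, p r₂)` and `(q s₁, q s₂)`. -/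
def AccessiblePair {d : ℕ} (π : Equiv.Perm (Fin d)) (p q : Fin 4 → Fin d) : Prop :=
  ∃ r₁ r₂ s₁ s₂ : Fin 4, r₁ < r₂ ∧ s₁ < s₂ ∧
    ({p r₁, p r₂, q s₁, q s₂} : Finset (Fin d)).card = 4 ∧
    (∃ u : Fin 4 → Fin d, StrictMono u ∧
      Set.range u = ({p r₁, p r₂, q s₁, q s₂} : Set (Fin d)) ∧
      ∃ σ : Equiv.Perm (Fin 4), RestrictsTo π u σ ∧ PermIrreducible σ ∧
        σ ≠ Equiv.swap 0 3) ∧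
    π (p r₂) < π (p r₁) ∧ π (q s₂) < π (q s₁)

/-!
If no point left of `q 0` has image above `min π(q)`, then `π` maps `[0, q 0)` into
`[0, min π(q))`; irreducibility makes this inclusion strict, so some point `y > q 0` has
`π y < min π(q)`. Hence there is a point `y` either left of `q 0` with `π y > min π(q)`, or right
of `q 0` with `π y < min π(q)`. Adding `y` to `q` gives five points, and an exhaustive check of the
`120` patterns of five points shows that four of them, including `y` and the leftmost point, lie in
the Rauzy class of `(4321)` and form an accessible pair with `q`. In the first case the new tuple
starts left of `q 0`; in the second it starts at `q 0` and its minimal image is below `min π(q)`.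
-/

open Equiv Finset Function

def IsRestriction {m d : ℕ} (π : Perm (Fin d)) (w : Fin m → Fin d) (ρ : Perm (Fin m)) : Prop :=
  ∀ a b, ρ a < ρ b ↔ π (w a) < π (w b)

theorem exists_isRestriction {m d : ℕ} (π : Perm (Fin d)) {w : Fin m → Fin d}
    (hw : Injective w) : ∃ ρ, IsRestriction π w ρ := by
  set v := π ∘ w
  have hsort : StrictMono (v ∘ Tuple.sort v) :=
    (Tuple.monotone_sort v).strictMono_of_injective
      ((π.injective.comp hw).comp (Tuple.sort v).injective)
  refine ⟨(Tuple.sort v)⁻¹, fun a b => ?_⟩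
  rw [← hsort.lt_iff_lt]
  simp [v]

section Restriction

variable {m d : ℕ} {π : Perm (Fin d)} {w : Fin m → Fin d} {ρ : Perm (Fin m)}

theorem restrictsTo_comp_iff (hρ : IsRestriction π w ρ) {c : Fin 4 → Fin m}
    {σ : Perm (Fin 4)} : RestrictsTo π (w ∘ c) σ ↔ RestrictsTo ρ c σ :=
  forall₂_congr fun a b => by rw [hρ]; rfl

theorem restrictsToRauzyClass_comp_iff (hρ : IsRestriction π w ρ) {c : Fin 4 → Fin m} :
    RestrictsToRauzyClass π (w ∘ c) ↔ RestrictsToRauzyClass ρ c := by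
  simp only [RestrictsToRauzyClass, restrictsTo_comp_iff hρ]

theorem AccessiblePair.comp_of_isRestriction (hw : StrictMono w) (hρ : IsRestriction π w ρ)
    {c J : Fin 4 → Fin m} (h : AccessiblePair ρ c J) : AccessiblePair π (w ∘ c) (w ∘ J) := by
  obtain ⟨r₁, r₂, s₁, s₂, hr, hs, hcard, ⟨u, hu, hrange, σ, hσ, hirr, hswap⟩, hrot₁, hrot₂⟩ := h
  refine ⟨r₁, r₂, s₁, s₂, hr, hs, ?_, ⟨w ∘ u, hw.comp hu, ?_, σ, (restrictsTo_comp_iff hρ).2 hσ,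
    hirr, hswap⟩, (hρ _ _).1 hrot₁, (hρ _ _).1 hrot₂⟩
  · simpa [image_insert] using
      (card_image_of_injective {c r₁, c r₂, J s₁, J s₂} hw.injective).trans hcard
  · rw [Set.range_comp, hrange]
    simp [Set.image_insert_eq]

end Restriction

instance : DecidablePred (· ∈ RauzyClass4321) := fun σ => by
  unfold RauzyClass4321; infer_instance

instance {n : ℕ} : DecidablePred (@PermIrreducible n) := fun π =>
  decidable_of_iff (∀ k : Fin n, 0 < (k : ℕ) → ∃ i : Fin n, (i : ℕ) < k ∧ (k : ℕ) ≤ π i)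
    ⟨fun h k hk hkn => h ⟨k, hkn⟩ hk, fun h k hk => h k hk k.isLt⟩

instance {d : ℕ} (π : Perm (Fin d)) (p : Fin 4 → Fin d) :
    Decidable (RestrictsToRauzyClass π p) := by
  unfold RestrictsToRauzyClass RestrictsTo; infer_instance

/-- Among five points the four points of an accessible pair are all points but one, `t`,
listed by `t.succAbove`; unlike `AccessiblePair`, this form is decidable. -/
def AccessiblePairFive (ρ : Perm (Fin 5)) (c J : Fin 4 → Fin 5) : Prop :=
  ∃ r₁ r₂ s₁ s₂ : Fin 4, r₁ < r₂ ∧ s₁ < s₂ ∧ ρ (c r₂) < ρ (c r₁) ∧ ρ (J s₂) < ρ (J s₁) ∧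
    ∃ t : Fin 5, ({c r₁, c r₂, J s₁, J s₂} : Finset (Fin 5)) = univ.erase t ∧
      ∃ σ : Perm (Fin 4), RestrictsTo ρ t.succAbove σ ∧ PermIrreducible σ ∧ σ ≠ swap 0 3

instance (ρ : Perm (Fin 5)) (c J : Fin 4 → Fin 5) : Decidable (AccessiblePairFive ρ c J) := by
  unfold AccessiblePairFive RestrictsTo; infer_instance

theorem AccessiblePairFive.accessiblePair {ρ : Perm (Fin 5)} {c J : Fin 4 → Fin 5}
    (h : AccessiblePairFive ρ c J) : AccessiblePair ρ c J := by
  obtain ⟨r₁, r₂, s₁, s₂, hr, hs, hrot₁, hrot₂, t, hset, hσ⟩ := h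
  refine ⟨r₁, r₂, s₁, s₂, hr, hs, by rw [hset]; simp, ⟨t.succAbove, Fin.strictMono_succAbove t,
    ?_, hσ⟩, hrot₁, hrot₂⟩
  ext x
  simpa [eq_comm] using (Finset.ext_iff.1 hset x).symm

set_option maxRecDepth 100000 in
theorem exists_rauzyClass_accessiblePairFive : ∀ (ρ : Perm (Fin 5)) (i : Fin 5),
    (i = 0 ∧ ∃ j, ρ (i.succAbove j) < ρ i) ∨ (i ≠ 0 ∧ ∀ j, ρ i < ρ (i.succAbove j)) →
    RestrictsToRauzyClass ρ i.succAbove →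
    ∃ t, t ≠ 0 ∧ t ≠ i ∧ RestrictsToRauzyClass ρ t.succAbove ∧
      AccessiblePairFive ρ t.succAbove i.succAbove := by
  decide

theorem exists_rauzyClass_accessiblePair_insertNth {d : ℕ} {π : Perm (Fin d)}
    {q : Fin 4 → Fin d} {y : Fin d} {i : Fin 5} (hw : StrictMono (i.insertNth y q))
    (hqR : RestrictsToRauzyClass π q)
    (hi : (i = 0 ∧ ∃ j, π (q j) < π y) ∨ (i ≠ 0 ∧ ∀ j, π y < π (q j))) :
    ∃ t, t ≠ 0 ∧ t ≠ i ∧ RestrictsToRauzyClass π (i.insertNth y q ∘ t.succAbove) ∧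
      AccessiblePair π (i.insertNth y q ∘ t.succAbove) q := by
  set w : Fin 5 → Fin d := i.insertNth y q
  have hwq : w ∘ i.succAbove = q := funext fun j => Fin.insertNth_apply_succAbove _ _ _ _
  obtain ⟨ρ, hρ⟩ := exists_isRestriction π hw.injective
  obtain ⟨t, ht0, hti, htR, htA⟩ := exists_rauzyClass_accessiblePairFive ρ i
    (by simpa only [hρ _ _, w, Fin.insertNth_apply_same, Fin.insertNth_apply_succAbove] using hi)
    (by rwa [← restrictsToRauzyClass_comp_iff hρ, hwq])
  exact ⟨t, ht0, hti, (restrictsToRauzyClass_comp_iff hρ).2 htR,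
    hwq ▸ htA.accessiblePair.comp_of_isRestriction hw hρ⟩

theorem StrictMono.lt_iff_lt_card_filter {n : ℕ} {α : Type*} [LinearOrder α]
    {q : Fin n → α} (hq : StrictMono q) (y : α) (j : Fin n) :
    q j < y ↔ (j : ℕ) < #{k | q k < y} := by
  constructor
  · intro hj
    have hsub : Iic j ⊆ ({k | q k < y} : Finset (Fin n)) := fun k hk =>
      mem_filter.2 ⟨mem_univ k, (hq.monotone (mem_Iic.1 hk)).trans_lt hj⟩
    simpa using card_le_card hsub
  · intro hj
    by_contra hyj
    have hsub : ({k | q k < y} : Finset (Fin n)) ⊆ Iio j := fun k hk =>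
      mem_Iio.2 (hq.lt_iff_lt.1 ((mem_filter.1 hk).2.trans_le (not_lt.1 hyj)))
    simpa using (card_le_card hsub).trans_lt' hj

theorem StrictMono.exists_strictMono_insertNth {n : ℕ} {α : Type*} [LinearOrder α]
    {q : Fin n → α} (hq : StrictMono q) {y : α} (hy : y ∉ Set.range q) :
    ∃ i : Fin (n + 1), StrictMono (i.insertNth y q) := by
  refine ⟨⟨#{k | q k < y}, Nat.lt_succ_of_le ((card_filter_le _ _).trans_eq (card_fin n))⟩,
    (Fin.strictMono_insertNth_iff _ _ _).2 ⟨hq, fun j hj => ?_, fun j hj => ?_⟩⟩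
  · exact (hq.lt_iff_lt_card_filter y j).2 hj
  · refine lt_of_le_of_ne (not_lt.1 fun hyj => ?_) fun hyj => hy ⟨j, hyj.symm⟩
    exact (not_lt.2 hj) ((hq.lt_iff_lt_card_filter y j).1 hyj)

theorem Fin.eq_zero_iff_lt_of_strictMono_insertNth {n : ℕ} {α : Type*} [LinearOrder α]
    {q : Fin (n + 1) → α} {y : α} {i : Fin (n + 2)} (hw : StrictMono (i.insertNth y q)) :
    i = 0 ↔ y < q 0 := by
  obtain ⟨-, hlt, hgt⟩ := (Fin.strictMono_insertNth_iff _ _ _).1 hw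
  refine ⟨fun hi => hgt 0 (hi ▸ Fin.zero_le _), fun hy => ?_⟩
  by_contra hi
  exact (hlt 0 (Fin.pos_iff_ne_zero.2 hi)).not_gt hy

theorem exists_rauzyClass_accessiblePair_of_extra_point {d : ℕ} {π : Perm (Fin d)}
    {q : Fin 4 → Fin d} (hq : StrictMono q) (hqR : RestrictsToRauzyClass π q) {y : Fin d}
    (hy : (y < q 0 ∧ ∃ j, π (q j) < π y) ∨ (q 0 < y ∧ ∀ j, π y < π (q j))) :
    ∃ a : Fin 4 → Fin d, StrictMono a ∧ RestrictsToRauzyClass π a ∧ AccessiblePair π a q ∧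
      (a 0 < q 0 ∨ a 0 = q 0 ∧ ∃ k, ∀ j, π (a k) < π (q j)) := by
  have hyq : y ∉ Set.range q := by
    rintro ⟨j, rfl⟩
    rcases hy with ⟨hj, -⟩ | ⟨-, hj⟩
    exacts [(hq.monotone (Fin.zero_le j)).not_gt hj, (hj j).false]
  obtain ⟨i, hw⟩ := hq.exists_strictMono_insertNth hyq
  have hi0 : i = 0 ↔ y < q 0 := Fin.eq_zero_iff_lt_of_strictMono_insertNth hw
  obtain ⟨t, ht0, hti, htR, htA⟩ := exists_rauzyClass_accessiblePair_insertNth hw hqR (by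
    rcases hy with ⟨hy0, hj⟩ | ⟨hy0, hyq⟩
    exacts [Or.inl ⟨hi0.2 hy0, hj⟩, Or.inr ⟨mt hi0.1 (not_lt.2 hy0.le), hyq⟩])
  set w : Fin 5 → Fin d := i.insertNth y q
  have hwi : w i = y := Fin.insertNth_apply_same _ _ _
  refine ⟨w ∘ t.succAbove, hw.comp (Fin.strictMono_succAbove t), htR, htA, ?_⟩
  have ha0 : w (t.succAbove 0) = w 0 := congrArg w (Fin.succAbove_ne_zero_zero ht0)
  rcases hy with ⟨hy0, -⟩ | ⟨hy0, hyq⟩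
  · left
    rwa [comp_apply, ha0, ← hi0.2 hy0, hwi]
  · have hw0 : w 0 = q 0 := by
      rw [← Fin.succAbove_ne_zero_zero (mt hi0.1 (not_lt.2 hy0.le))]
      exact Fin.insertNth_apply_succAbove _ _ _ _
    obtain ⟨k, hk⟩ := Fin.exists_succAbove_eq hti.symm
    exact Or.inr ⟨ha0.trans hw0, k, by simpa [hk, hwi] using hyq⟩

theorem PermIrreducible.exists_le_and_lt {n : ℕ} {π : Perm (Fin n)} (hπ : PermIrreducible π)
    {k m : Fin n} (hk : 0 < (k : ℕ)) (hlt : ∀ x < k, π x < m) : ∃ z, k ≤ z ∧ π z < m := by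
  have hsub : (Iio k).image π ⊆ Iio m := by
    simpa [subset_iff] using hlt
  have hcard : #((Iio k).image π) = k := by
    rw [card_image_of_injective _ π.injective, Fin.card_Iio]
  obtain ⟨x, hxk, hkx⟩ := hπ k hk k.isLt
  have hkm : (k : ℕ) < m := hkx.trans_lt (hlt x hxk)
  obtain ⟨v, hvm, hv⟩ := exists_of_ssubset (Finset.ssubset_iff_subset_ne.2
    ⟨hsub, fun h => by rw [h, Fin.card_Iio] at hcard; omega⟩)
  refine ⟨π.symm v, not_lt.1 fun h => hv ?_, by simpa using hvm⟩
  exact mem_image.2 ⟨π.symm v, mem_Iio.2 h, π.apply_symm_apply v⟩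

theorem PermIrreducible.exists_extra_point {n k : ℕ} {π : Perm (Fin n)}
    (hπ : PermIrreducible π) {q : Fin (k + 1) → Fin n} (hq : StrictMono q)
    (hq0 : 0 < (q 0 : ℕ)) :
    ∃ y, (y < q 0 ∧ ∃ j, π (q j) < π y) ∨ (q 0 < y ∧ ∀ j, π y < π (q j)) := by
  by_cases h : ∃ x < q 0, ∃ j, π (q j) < π x
  · obtain ⟨x, hx, hxj⟩ := h
    exact ⟨x, Or.inl ⟨hx, hxj⟩⟩
  push Not at h
  have hlt : ∀ x < q 0, π x < univ.inf' univ_nonempty (π ∘ q) := fun x hx =>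
    (lt_inf'_iff _).2 fun j _ => (h x hx j).lt_of_ne
      (π.injective.ne (hx.trans_le (hq.monotone (Fin.zero_le j))).ne)
  obtain ⟨z, hz, hzm⟩ := hπ.exists_le_and_lt hq0 hlt
  have hzq : ∀ j, π z < π (q j) := fun j => hzm.trans_le (inf'_le _ (mem_univ j))
  exact ⟨z, Or.inr ⟨hz.lt_of_ne fun h => (hzq 0).ne (by rw [h]), hzq⟩⟩

theorem decrease_distance_general (d : ℕ) (π : Equiv.Perm (Fin d))
    (hπ : PermIrreducible π) (p q : Fin 4 → Fin d)
    (hq : StrictMono q)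
    (hqR : RestrictsToRauzyClass π q)
    (hpos : p 3 < q 0) :
    ∃ a : Fin 4 → Fin d, StrictMono a ∧ RestrictsToRauzyClass π a ∧
      AccessiblePair π a q ∧
      ((((a 0 : ℕ) : ℤ) - ((p 3 : ℕ) : ℤ) < ((q 0 : ℕ) : ℤ) - ((p 3 : ℕ) : ℤ)) ∨
        (((a 0 : ℕ) : ℤ) - ((p 3 : ℕ) : ℤ) = ((q 0 : ℕ) : ℤ) - ((p 3 : ℕ) : ℤ) ∧
          (Finset.univ.inf' Finset.univ_nonempty (fun i => ((π (a i) : ℕ) : ℤ))) -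
            (Finset.univ.sup' Finset.univ_nonempty (fun i => ((π (p i) : ℕ) : ℤ))) <
          (Finset.univ.inf' Finset.univ_nonempty (fun j => ((π (q j) : ℕ) : ℤ))) -
            (Finset.univ.sup' Finset.univ_nonempty (fun i => ((π (p i) : ℕ) : ℤ))))) := by
  obtain ⟨y, hy⟩ := hπ.exists_extra_point hq ((Nat.zero_le _).trans_lt hpos)
  obtain ⟨a, ha, haR, haA, hcloser⟩ := exists_rauzyClass_accessiblePair_of_extra_point hq hqR hy
  refine ⟨a, ha, haR, haA, ?_⟩
  rcases hcloser with h | ⟨h, k, hk⟩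
  · have : (a 0 : ℕ) < q 0 := h
    omega
  · refine Or.inr ⟨by rw [h], sub_lt_sub_right ((inf'_le _ (mem_univ k)).trans_lt
      ((lt_inf'_iff _).2 fun j _ => ?_)) _⟩
    exact_mod_cast hk j

/-- Decreasing distance: if `P`, `Q` are non-accessible with `P` entirely preceding `Q`
(in position and image), there is a `4`-tuple `A` in the Rauzy class of `(4321)` that is
accessible from `Q` and lexicographically strictly closer to `P`. -/
theorem decrease_distance (d : ℕ) (π : Equiv.Perm (Fin d))
    (hπ : PermIrreducible π) (p q : Fin 4 → Fin d)
    (hp : StrictMono p) (hq : StrictMono q)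
    (hpR : RestrictsToRauzyClass π p) (hqR : RestrictsToRauzyClass π q)
    (hacc : ¬ AccessiblePair π p q)
    (hpos : p 3 < q 0)
    (himg : ∀ i j : Fin 4, π (p i) < π (q j)) :
    ∃ a : Fin 4 → Fin d, StrictMono a ∧ RestrictsToRauzyClass π a ∧
      AccessiblePair π a q ∧
      ((((a 0 : ℕ) : ℤ) - ((p 3 : ℕ) : ℤ) < ((q 0 : ℕ) : ℤ) - ((p 3 : ℕ) : ℤ)) ∨
        (((a 0 : ℕ) : ℤ) - ((p 3 : ℕ) : ℤ) = ((q 0 : ℕ) : ℤ) - ((p 3 : ℕ) : ℤ) ∧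
          (Finset.univ.inf' Finset.univ_nonempty (fun i => ((π (a i) : ℕ) : ℤ))) -
            (Finset.univ.sup' Finset.univ_nonempty (fun i => ((π (p i) : ℕ) : ℤ))) <
          (Finset.univ.inf' Finset.univ_nonempty (fun j => ((π (q j) : ℕ) : ℤ))) -
            (Finset.univ.sup' Finset.univ_nonempty (fun i => ((π (p i) : ℕ) : ℤ))))) :=
  decrease_distance_general d π hπ p q hq hqR hpos
end
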